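/- arXiv:math/0005237 — 5 statements merged into one kernel-verified Lean document; each statement's English description precedes it below -/
import Mathlib

section
/- Let f : ℝ → [0,∞) be a probability density on ℝ that is Lipschitz continuous with Lipschitz constant L > 0, and let F(x) := ∫_{−∞}^{x} f(t) dt be the associated distribution function. Then for every x ∈ ℝ, f(x) ≤ √(2·L·min(F(x), 1 − F(x))). -/
open MeasureTheory Real Set

/-!
Near a point `x` the density stays above the tent `f x - L |x - t|`, which lives on
`[x - f x / L, x + f x / L]`. Each half of the tent lies on one side of `x` and has area
`f x ^ 2 / (2 L)`, so both `F x` and `1 - F x` are at least `f x ^ 2 / (2 L)`.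
-/

lemma integral_sub_mul_zero_div (c : ℝ) {L : ℝ} (hL : L ≠ 0) :
    ∫ u in (0 : ℝ)..c / L, (c - L * u) = c ^ 2 / (2 * L) := by
  rw [intervalIntegral.integral_sub intervalIntegrable_const
      ((continuous_const_mul L).intervalIntegrable _ _),
    intervalIntegral.integral_const, intervalIntegral.integral_const_mul, integral_id]
  simp only [smul_eq_mul, sub_zero]
  field_simp
  ring

section Tent

variable {f : ℝ → ℝ} {L x : ℝ}

lemma sq_div_le_setIntegral_Ioc_left (hL : 0 < L) (hx : 0 ≤ f x)
    (hf : IntegrableOn f (Ioc (x - f x / L) x))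
    (hlip : ∀ t, |f x - f t| ≤ L * |x - t|) :
    f x ^ 2 / (2 * L) ≤ ∫ t in Ioc (x - f x / L) x, f t := by
  have hax : x - f x / L ≤ x := sub_le_self _ (div_nonneg hx hL.le)
  calc f x ^ 2 / (2 * L) = ∫ u in (0 : ℝ)..f x / L, (f x - L * u) :=
        (integral_sub_mul_zero_div _ hL.ne').symm
    _ = ∫ t in (x - f x / L)..x, (f x - L * (x - t)) := by
        rw [intervalIntegral.integral_comp_sub_left (fun u => f x - L * u)]
        simp
    _ = ∫ t in Ioc (x - f x / L) x, (f x - L * (x - t)) := intervalIntegral.integral_of_le hax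
    _ ≤ ∫ t in Ioc (x - f x / L) x, f t := by
        refine setIntegral_mono_on (Continuous.integrableOn_Ioc (by fun_prop)) hf
          measurableSet_Ioc fun t ht => ?_
        have := (abs_le.mp (hlip t)).2
        rw [abs_of_nonneg (sub_nonneg.mpr ht.2)] at this
        linarith

lemma sq_div_le_setIntegral_Ioc_right (hL : 0 < L) (hx : 0 ≤ f x)
    (hf : IntegrableOn f (Ioc x (x + f x / L)))
    (hlip : ∀ t, |f x - f t| ≤ L * |x - t|) :
    f x ^ 2 / (2 * L) ≤ ∫ t in Ioc x (x + f x / L), f t := by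
  have hxb : x ≤ x + f x / L := le_add_of_nonneg_right (div_nonneg hx hL.le)
  calc f x ^ 2 / (2 * L) = ∫ u in (0 : ℝ)..f x / L, (f x - L * u) :=
        (integral_sub_mul_zero_div _ hL.ne').symm
    _ = ∫ t in x..(x + f x / L), (f x - L * (t - x)) := by
        rw [intervalIntegral.integral_comp_sub_right (fun u => f x - L * u)]
        simp
    _ = ∫ t in Ioc x (x + f x / L), (f x - L * (t - x)) := intervalIntegral.integral_of_le hxb
    _ ≤ ∫ t in Ioc x (x + f x / L), f t := by
        refine setIntegral_mono_on (Continuous.integrableOn_Ioc (by fun_prop)) hf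
          measurableSet_Ioc fun t ht => ?_
        have := (abs_le.mp (hlip t)).2
        rw [abs_sub_comm, abs_of_nonneg (sub_nonneg.mpr ht.1.le)] at this
        linarith

end Tent

theorem stmt2_general (f : ℝ → ℝ) (L : ℝ) (hL : 0 < L)
    (hf_nonneg : ∀ x, 0 ≤ f x)
    (hf_int : ∫ x : ℝ, f x = 1)
    (hf_lip : ∀ x y : ℝ, |f x - f y| ≤ L * |x - y|) :
    ∀ x : ℝ,
      f x ≤ Real.sqrt (2 * L *
        min (∫ t in Set.Iic x, f t) (1 - ∫ t in Set.Iic x, f t)) := by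
  intro x
  have hint : Integrable f := by
    by_contra h
    rw [integral_undef h] at hf_int
    exact zero_ne_one hf_int
  have hleft : f x ^ 2 / (2 * L) ≤ ∫ t in Iic x, f t :=
    (sq_div_le_setIntegral_Ioc_left hL (hf_nonneg x) hint.integrableOn (hf_lip x)).trans
      (setIntegral_mono_set hint.integrableOn (.of_forall hf_nonneg)
        Ioc_subset_Iic_self.eventuallyLE)
  have hright : f x ^ 2 / (2 * L) ≤ 1 - ∫ t in Iic x, f t := by
    rw [← hf_int, ← intervalIntegral.integral_Iic_add_Ioi hint.integrableOn hint.integrableOn,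
      add_sub_cancel_left]
    exact (sq_div_le_setIntegral_Ioc_right hL (hf_nonneg x) hint.integrableOn (hf_lip x)).trans
      (setIntegral_mono_set hint.integrableOn (.of_forall hf_nonneg)
        Ioc_subset_Ioi_self.eventuallyLE)
  calc f x = √(f x ^ 2) := (sqrt_sq (hf_nonneg x)).symm
    _ ≤ _ := sqrt_le_sqrt ((div_le_iff₀' (by positivity)).mp (le_min hleft hright))

/-- If `f` is a probability density on `ℝ` that is Lipschitz with constant `L > 0`, and
`F x = ∫_{-∞}^x f` is its distribution function, then
`f x ≤ √(2 L min (F x, 1 - F x))` for every `x`. -/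
theorem stmt2 (f : ℝ → ℝ) (L : ℝ) (hL : 0 < L)
    (hf_meas : Measurable f) (hf_nonneg : ∀ x, 0 ≤ f x)
    (hf_int : ∫ x : ℝ, f x = 1)
    (hf_lip : ∀ x y : ℝ, |f x - f y| ≤ L * |x - y|) :
    ∀ x : ℝ,
      f x ≤ Real.sqrt (2 * L *
        min (∫ t in Set.Iic x, f t) (1 - ∫ t in Set.Iic x, f t)) :=
  stmt2_general f L hL hf_nonneg hf_int hf_lip
end

section
/- Let X be a real random variable whose law has a Lebesgue density f : ℝ → [0,∞) that is Lipschitz continuous with Lipschitz constant L > 0, and suppose E[X⁴] ≤ 1. Then for every x ≠ 0, f(x) ≤ √(2L)/x². Consequently, if in addition f is bounded by K, then f(x) ≤ min(K, √(2L)·x^{-2}) for all x ≠ 0. -/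
/-!
Fix `x ≥ 0` and write `c = f x`. By the Lipschitz bound, `f` stays above the tent
`y ↦ c - L (y - x)` on `[x, x + c/L]`, whose area is `c² / (2L)`, and there `yⁿ ≥ xⁿ`.
Hence `xⁿ c² / (2L) ≤ ∫ yⁿ f(y) dy`; reflecting `f` gives the same for `x < 0` when `n` is even.
With `n = 4` and fourth moment at most `1` this is `x⁴ f(x)² ≤ 2L`.
-/

open MeasureTheory Real

lemma integral_tent {L : ℝ} (hL : 0 < L) (x c : ℝ) :
    ∫ y in x..x + c / L, (c - L * (y - x)) = c ^ 2 / (2 * L) := by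
  rw [intervalIntegral.integral_comp_sub_right (fun t => c - L * t), add_sub_cancel_left,
    sub_self, intervalIntegral.integral_sub intervalIntegrable_const
      (intervalIntegral.intervalIntegrable_id.const_mul L),
    intervalIntegral.integral_const, intervalIntegral.integral_const_mul, integral_id,
    smul_eq_mul]
  field_simp
  ring

section EvenMoment

variable {f : ℝ → ℝ} {L : ℝ} {n : ℕ}

lemma pow_mul_sq_div_le_integral_of_nonneg (hL : 0 < L) (hn : Even n)
    (hf_nonneg : ∀ x, 0 ≤ f x) (hf_lip : ∀ x y : ℝ, |f x - f y| ≤ L * |x - y|)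
    (hmom_int : Integrable (fun y : ℝ => y ^ n * f y)) {x : ℝ} (hx : 0 ≤ x) :
    x ^ n * f x ^ 2 / (2 * L) ≤ ∫ y, y ^ n * f y := by
  have hδ : x ≤ x + f x / L := le_add_of_nonneg_right (div_nonneg (hf_nonneg x) hL.le)
  have h_tent_le :
      ∀ y ∈ Set.Icc x (x + f x / L), x ^ n * (f x - L * (y - x)) ≤ y ^ n * f y := by
    rintro y ⟨hxy, hy⟩
    have h_lip : f x - L * (y - x) ≤ f y := by
      have := (abs_le.mp (hf_lip x y)).2
      rw [abs_sub_comm, abs_of_nonneg (sub_nonneg.mpr hxy)] at this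
      linarith
    have h_tent_nonneg : 0 ≤ f x - L * (y - x) := by
      have : L * (y - x) ≤ L * (f x / L) := mul_le_mul_of_nonneg_left (by linarith) hL.le
      rw [mul_div_cancel₀ (f x) hL.ne'] at this
      linarith
    exact mul_le_mul (pow_le_pow_left₀ hx hxy n) h_lip h_tent_nonneg (pow_nonneg (hx.trans hxy) n)
  calc x ^ n * f x ^ 2 / (2 * L) = ∫ y in x..x + f x / L, x ^ n * (f x - L * (y - x)) := by
        rw [intervalIntegral.integral_const_mul, integral_tent hL]
        ring
    _ ≤ ∫ y in x..x + f x / L, y ^ n * f y :=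
        intervalIntegral.integral_mono_on hδ
          (Continuous.intervalIntegrable (by fun_prop) _ _) hmom_int.intervalIntegrable h_tent_le
    _ ≤ ∫ y, y ^ n * f y := by
        rw [intervalIntegral.integral_of_le hδ]
        exact setIntegral_le_integral hmom_int
          (ae_of_all _ fun y => mul_nonneg (hn.pow_nonneg y) (hf_nonneg y))

lemma pow_mul_sq_div_le_integral (hL : 0 < L) (hn : Even n)
    (hf_nonneg : ∀ x, 0 ≤ f x) (hf_lip : ∀ x y : ℝ, |f x - f y| ≤ L * |x - y|)
    (hmom_int : Integrable (fun y : ℝ => y ^ n * f y)) (x : ℝ) :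
    x ^ n * f x ^ 2 / (2 * L) ≤ ∫ y, y ^ n * f y := by
  rcases le_or_gt 0 x with hx | hx
  · exact pow_mul_sq_div_le_integral_of_nonneg hL hn hf_nonneg hf_lip hmom_int hx
  have h_reflect : (fun y : ℝ => y ^ n * f (-y)) = fun y => (-y) ^ n * f (-y) := by
    simp only [hn.neg_pow]
  have h_reflect_int : Integrable (fun y : ℝ => y ^ n * f (-y)) := by
    rw [h_reflect]
    exact hmom_int.comp_neg
  have h_reflect_integral : ∫ y, y ^ n * f (-y) = ∫ y, y ^ n * f y := by
    rw [h_reflect]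
    exact integral_neg_eq_self (fun y => y ^ n * f y) volume
  have h := pow_mul_sq_div_le_integral_of_nonneg (f := fun y => f (-y)) hL hn
    (fun y => hf_nonneg (-y))
    (fun a b => by simpa [abs_sub_comm, neg_add_eq_sub] using hf_lip (-a) (-b))
    h_reflect_int (neg_nonneg.mpr hx.le)
  simpa only [neg_neg, hn.neg_pow, h_reflect_integral] using h

end EvenMoment

lemma le_sqrt_div_sq_of_pow_four_mul_sq_le {c x B : ℝ} (hx : x ≠ 0)
    (h : x ^ 4 * c ^ 2 ≤ B) : c ≤ √B / x ^ 2 := by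
  rw [le_div_iff₀ (by positivity)]
  exact Real.le_sqrt_of_sq_le (by linarith)

theorem stmt3_general (f : ℝ → ℝ) (L K : ℝ) (hL : 0 < L)
    (hf_nonneg : ∀ x, 0 ≤ f x)
    (hf_lip : ∀ x y : ℝ, |f x - f y| ≤ L * |x - y|)
    (hmom_int : Integrable (fun x : ℝ => x ^ 4 * f x))
    (hmom : ∫ x : ℝ, x ^ 4 * f x ≤ 1) :
    (∀ x : ℝ, x ≠ 0 → f x ≤ Real.sqrt (2 * L) / x ^ 2) ∧
    ((∀ x : ℝ, f x ≤ K) →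
      ∀ x : ℝ, x ≠ 0 → f x ≤ min K (Real.sqrt (2 * L) / x ^ 2)) := by
  have h_decay : ∀ x : ℝ, x ≠ 0 → f x ≤ √(2 * L) / x ^ 2 := by
    intro x hx
    have h := (pow_mul_sq_div_le_integral hL (by decide) hf_nonneg hf_lip hmom_int x).trans hmom
    rw [div_le_one (by positivity)] at h
    exact le_sqrt_div_sq_of_pow_four_mul_sq_le hx h
  exact ⟨h_decay, fun hK x hx => le_min (hK x) (h_decay x hx)⟩

/-- If `f` is a Lipschitz (constant `L > 0`) probability density on `ℝ` with fourth moment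
`∫ x⁴ f(x) dx ≤ 1`, then `f x ≤ √(2L)/x²` for every `x ≠ 0`; consequently, if moreover
`f ≤ K`, then `f x ≤ min (K, √(2L)/x²)` for all `x ≠ 0`. -/
theorem stmt3 (f : ℝ → ℝ) (L K : ℝ) (hL : 0 < L)
    (hf_meas : Measurable f) (hf_nonneg : ∀ x, 0 ≤ f x)
    (hf_int : ∫ x : ℝ, f x = 1)
    (hf_lip : ∀ x y : ℝ, |f x - f y| ≤ L * |x - y|)
    (hmom_int : Integrable (fun x : ℝ => x ^ 4 * f x))
    (hmom : ∫ x : ℝ, x ^ 4 * f x ≤ 1) :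
    (∀ x : ℝ, x ≠ 0 → f x ≤ Real.sqrt (2 * L) / x ^ 2) ∧
    ((∀ x : ℝ, f x ≤ K) →
      ∀ x : ℝ, x ≠ 0 → f x ≤ min K (Real.sqrt (2 * L) / x ^ 2)) :=
  stmt3_general f L K hL hf_nonneg hf_lip hmom_int hmom
end

section
/- Define the Quicksort comparison count qc : List ℕ → ℕ recursively by qc([]) = 0 and qc(p :: l) = (length of l) + qc(filter of l by elements < p) + qc(filter of l by elements > p). Then for every n ≥ 1, the average of qc over all n! permutations of {1, …, n} equals 2(n+1)H_n − 4n, where H_n = Σ_{j=1}^{n} 1/j is the n-th harmonic number; i.e., (1/n!)·Σ_σ qc(σ) = 2(n+1)H_n − 4n, the sum being over all permutations σ of [1,…,n]. -/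
/-!
Quicksort compares two values `a < b` at most once, and it does so exactly when the first of
`a, a + 1, …, b` to appear in the list is `a` or `b`: until then all of `[a, b]` stays in one
sublist, and a pivot strictly inside separates `a` from `b` for good. Hence `qc σ` counts such
pairs. Over all permutations of `1, …, n`, swapping `a` with any `c ∈ [a, b]` shows that each
element of `[a, b]` is equally likely to come first, so the pair is compared with probability
`2 / (b - a + 1)`, and summing over pairs gives `2 (n + 1) Hₙ - 4 n`.
-/

/-- Number of key comparisons made by Quicksort, using the first element as pivot. -/
def qc : List ℕ → ℕ
  | [] => 0
  | p :: l => l.length + qc (l.filter (fun x => x < p)) + qc (l.filter (fun x => p < x))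
termination_by l => l.length
decreasing_by
  all_goals exact Nat.lt_succ_of_le (by rw [List.length_unattach]; exact (List.length_filter_le _ _).trans List.length_attach.le)

open Finset

namespace List

variable {α : Type*}

theorem find?_mem_filter {L σ : List α} (hσ : σ ~ L) {p : α → Bool} {x : α} (hx : x ∈ L)
    (hpx : p x) : ∃ c ∈ L.filter p, σ.find? p = some c := by
  obtain ⟨c, hc⟩ := Option.ne_none_iff_exists'.mp <| mt find?_eq_none.mp <|
    fun h => h x (hσ.mem_iff.mpr hx) hpx
  exact ⟨c, mem_filter.mpr ⟨hσ.mem_iff.mp (mem_of_find?_eq_some hc), find?_some hc⟩, hc⟩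

variable [DecidableEq α]

theorem Nodup.map_swap_perm {L : List α} (hL : L.Nodup) {x y : α} (hx : x ∈ L) (hy : y ∈ L) :
    L.map (Equiv.swap x y) ~ L := by
  rw [perm_ext_iff_of_nodup (hL.map (Equiv.injective _)) hL]
  intro z
  rw [mem_map_of_involutive (Equiv.swap_apply_self x y), Equiv.swap_apply_def]
  split_ifs with h₁ h₂ <;> simp_all

theorem find?_map_swap {p : α → Bool} {x y : α} (hxy : p x = p y) (σ : List α) :
    (σ.map (Equiv.swap x y)).find? p = (σ.find? p).map (Equiv.swap x y) := by
  rw [find?_map]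
  congr 2
  funext z
  rw [Function.comp_apply, Equiv.swap_apply_def]
  split_ifs with h₁ h₂ <;> simp_all

theorem card_permutations_find?_eq_some_eq {L : List α} (hL : L.Nodup) {p : α → Bool} {x y : α}
    (hx : x ∈ L) (hy : y ∈ L) (hxy : p x = p y) :
    #{σ ∈ L.permutations.toFinset | σ.find? p = some x} =
      #{σ ∈ L.permutations.toFinset | σ.find? p = some y} := by
  have hmaps : ∀ σ ∈ L.permutations.toFinset,
      σ.map (Equiv.swap x y) ∈ L.permutations.toFinset := by
    intro σ hσ
    rw [mem_toFinset, mem_permutations] at hσ ⊢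
    exact (hσ.map _).trans (hL.map_swap_perm hx hy)
  have hinv : ∀ σ : List α, (σ.map (Equiv.swap x y)).map (Equiv.swap x y) = σ := by
    intro σ; simp [map_map, Function.comp_def]
  apply Finset.card_nbij' (fun σ => σ.map (Equiv.swap x y)) (fun σ => σ.map (Equiv.swap x y))
  · intro σ hσ
    simp only [coe_filter, Set.mem_ofPred_eq] at hσ ⊢
    refine ⟨hmaps σ hσ.1, ?_⟩
    rw [find?_map_swap hxy, hσ.2, Option.map_some, Equiv.swap_apply_left]
  · intro σ hσ
    simp only [coe_filter, Set.mem_ofPred_eq] at hσ ⊢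
    refine ⟨hmaps σ hσ.1, ?_⟩
    rw [find?_map_swap hxy, hσ.2, Option.map_some, Equiv.swap_apply_right]
  · intro σ _; exact hinv σ
  · intro σ _; exact hinv σ

theorem length_filter_mul_card_permutations_find?_eq_some {L : List α} (hL : L.Nodup)
    {p : α → Bool} {x : α} (hx : x ∈ L) (hpx : p x) :
    (L.filter p).length * #{σ ∈ L.permutations.toFinset | σ.find? p = some x} =
      L.length.factorial := by
  have hfibres := card_eq_sum_card_fiberwise (f := fun σ : List α => σ.find? p)
    (s := L.permutations.toFinset) (t := (L.filter p).toFinset.image some) <| by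
      intro σ hσ
      obtain ⟨c, hc, hσc⟩ :=
        find?_mem_filter (mem_permutations.mp (mem_toFinset.mp hσ)) hx hpx
      simpa [hσc] using hc
  rw [toFinset_card_of_nodup (nodup_permutations _ hL), length_permutations,
    sum_image (fun _ _ _ _ h => Option.some_injective _ h)] at hfibres
  rw [hfibres, ← toFinset_card_of_nodup (hL.filter p), ← smul_eq_mul, ← sum_const]
  refine sum_congr rfl fun c hc => ?_
  obtain ⟨hcL, hpc⟩ := mem_filter.mp (mem_toFinset.mp hc)
  exact card_permutations_find?_eq_some_eq hL hx hcL (hpx.trans hpc.symm)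

end List

def Compared (σ : List ℕ) (a b : ℕ) : Prop :=
  a < b ∧ a ∈ σ ∧ b ∈ σ ∧
    (σ.find? (fun x => a ≤ x ∧ x ≤ b) = some a ∨
      σ.find? (fun x => a ≤ x ∧ x ≤ b) = some b)

instance (σ : List ℕ) (a b : ℕ) : Decidable (Compared σ a b) := by
  unfold Compared; infer_instance

section Compared

variable {a b p : ℕ} {l : List ℕ}

theorem compared_filter_iff {q : ℕ → Bool} (hq : ∀ x, a ≤ x → x ≤ b → q x) :
    Compared (l.filter q) a b ↔ Compared l a b := by
  have hfind :
      (l.filter q).find? (fun x => a ≤ x ∧ x ≤ b) = l.find? fun x => a ≤ x ∧ x ≤ b := by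
    rw [List.find?_filter]
    congr 1
    funext x
    by_cases hx : a ≤ x ∧ x ≤ b <;> simp [hx, hq x]
  unfold Compared
  rw [hfind, List.mem_filter, List.mem_filter]
  constructor
  · rintro ⟨hab, ⟨ha, -⟩, ⟨hb, -⟩, h⟩
    exact ⟨hab, ha, hb, h⟩
  · rintro ⟨hab, ha, hb, h⟩
    exact ⟨hab, ⟨ha, hq a le_rfl hab.le⟩, ⟨hb, hq b hab.le le_rfl⟩, h⟩

theorem not_compared_filter {q : ℕ → Bool} (hq : q a = false ∨ q b = false) :
    ¬ Compared (l.filter q) a b := by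
  rintro ⟨-, ha, hb, -⟩
  rw [List.mem_filter] at ha hb
  rcases hq with hq | hq <;> simp_all

theorem compared_cons_of_lt_or_lt (hp : p < a ∨ b < p) :
    Compared (p :: l) a b ↔ Compared l a b := by
  have hfind :=
    List.find?_cons_of_neg (p := fun x => decide (a ≤ x ∧ x ≤ b)) (a := p) (l := l)
    (by simp only [decide_eq_true_eq]; omega)
  unfold Compared
  rw [hfind, List.mem_cons, List.mem_cons]
  constructor
  · rintro ⟨hab, ha | ha, hb | hb, h⟩ <;> first | omega | exact ⟨hab, ha, hb, h⟩
  · rintro ⟨hab, ha, hb, h⟩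
    exact ⟨hab, Or.inr ha, Or.inr hb, h⟩

theorem compared_cons_of_mem_Icc (hap : a ≤ p) (hpb : p ≤ b) :
    Compared (p :: l) a b ↔ a < b ∧ (a = p ∧ b ∈ l ∨ b = p ∧ a ∈ l) := by
  have hfind :=
    List.find?_cons_of_pos (p := fun x => decide (a ≤ x ∧ x ≤ b)) (a := p) (l := l)
    (by simp only [decide_eq_true_eq]; omega)
  unfold Compared
  rw [hfind, List.mem_cons, List.mem_cons, Option.some_inj, Option.some_inj]
  constructor
  · rintro ⟨hab, ha, hb, rfl | rfl⟩
    · exact ⟨hab, Or.inl ⟨rfl, hb.resolve_left hab.ne'⟩⟩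
    · exact ⟨hab, Or.inr ⟨rfl, ha.resolve_left hab.ne⟩⟩
  · rintro ⟨hab, ⟨rfl, hb⟩ | ⟨rfl, ha⟩⟩
    · exact ⟨hab, Or.inl rfl, Or.inr hb, Or.inl rfl⟩
    · exact ⟨hab, Or.inr ha, Or.inl rfl, Or.inr rfl⟩

theorem ite_compared_cons :
    (if Compared (p :: l) a b then 1 else 0) =
      (if a < b ∧ (a = p ∧ b ∈ l ∨ b = p ∧ a ∈ l) then 1 else 0) +
        (if Compared (l.filter (· < p)) a b then 1 else 0) +
        (if Compared (l.filter (p < ·)) a b then 1 else 0) := by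
  by_cases hab : a < b
  swap
  · simp [Compared, hab]
  have hsmall (h : p ≤ b) : ¬ Compared (l.filter (· < p)) a b :=
    not_compared_filter (Or.inr (by simpa using h))
  have hlarge (h : a ≤ p) : ¬ Compared (l.filter (p < ·)) a b :=
    not_compared_filter (Or.inl (by simpa using h))
  rcases lt_or_ge b p with hbp | hpb
  · simp only [compared_cons_of_lt_or_lt (Or.inr hbp), hlarge (by omega),
      compared_filter_iff (a := a) (b := b) (q := (· < p)) fun x _ _ => by simp only [decide_eq_true_eq]; omega]
    simp [show a ≠ p by omega, show b ≠ p by omega]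
  rcases lt_or_ge p a with hpa | hap
  · simp only [compared_cons_of_lt_or_lt (Or.inl hpa), hsmall hpb,
      compared_filter_iff (a := a) (b := b) (q := (p < ·)) fun x _ _ => by simp only [decide_eq_true_eq]; omega]
    simp [show a ≠ p by omega, show b ≠ p by omega]
  · simp [compared_cons_of_mem_Icc hap hpb, hsmall hpb, hlarge hap]

end Compared

theorem card_pivot_pairs {F : Finset ℕ} {p : ℕ} {l : List ℕ} (hl : l.Nodup) (hpl : p ∉ l)
    (hpF : p ∈ F) (hlF : ∀ x ∈ l, x ∈ F) :
    #{q ∈ F ×ˢ F | q.1 < q.2 ∧ (q.1 = p ∧ q.2 ∈ l ∨ q.2 = p ∧ q.1 ∈ l)} =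
      l.length := by
  have hpivot : {q ∈ F ×ˢ F | q.1 < q.2 ∧ (q.1 = p ∧ q.2 ∈ l ∨ q.2 = p ∧ q.1 ∈ l)} =
      l.toFinset.image fun x => (min p x, max p x) := by
    ext ⟨a, b⟩
    simp only [mem_filter, mem_product, mem_image, List.mem_toFinset, Prod.mk.injEq]
    constructor
    · rintro ⟨-, hab, ⟨rfl, hb⟩ | ⟨rfl, ha⟩⟩
      · exact ⟨b, hb, by omega, by omega⟩
      · exact ⟨a, ha, by omega, by omega⟩
    · rintro ⟨x, hx, rfl, rfl⟩
      have hxp : x ≠ p := ne_of_mem_of_not_mem hx hpl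
      rcases lt_or_gt_of_ne hxp with h | h
      · simp [min_eq_right h.le, max_eq_left h.le, h, hx, hpF, hlF x hx]
      · simp [min_eq_left h.le, max_eq_right h.le, h, hx, hpF, hlF x hx]
  rw [hpivot, card_image_of_injOn, List.toFinset_card_of_nodup hl]
  intro x hx y hy hxy
  simp only [Prod.mk.injEq] at hxy
  omega

theorem qc_eq_card_compared {F : Finset ℕ} {σ : List ℕ} (hσ : σ.Nodup)
    (hF : ∀ x ∈ σ, x ∈ F) :
    qc σ = #{q ∈ F ×ˢ F | Compared σ q.1 q.2} := by
  induction hlen : σ.length using Nat.strong_induction_on generalizing σ with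
  | _ n ih =>
  cases σ with
  | nil => simp [qc, Compared]
  | cons p l =>
    obtain ⟨hpl, hl⟩ := List.nodup_cons.mp hσ
    have hrec (q : ℕ → Bool) :
        qc (l.filter q) = #{q' ∈ F ×ˢ F | Compared (l.filter q) q'.1 q'.2} :=
      ih _ (hlen ▸ Nat.lt_succ_of_le (List.length_filter_le _ _)) (hl.filter q)
        (fun x hx => hF x (List.mem_cons_of_mem _ (List.mem_of_mem_filter hx))) rfl
    rw [qc.eq_2, hrec, hrec, ← card_pivot_pairs hl hpl (hF p List.mem_cons_self)
      (fun x hx => hF x (List.mem_cons_of_mem _ hx))]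
    simp only [card_filter, ← sum_add_distrib]
    exact sum_congr rfl fun q _ => ite_compared_cons.symm

theorem sum_Icc_one_div_eq_harmonic_succ_sub_one (n : ℕ) :
    ∑ a ∈ Icc 1 n, 1 / ((n : ℝ) + 2 - a) = harmonic (n + 1) - 1 := by
  have hreflect := sum_Ico_reflect (fun j : ℕ => 1 / ((j : ℝ) + 1)) 1 (Nat.le_succ (n + 1))
  rw [show n + 1 + 1 - (n + 1) = 1 by omega, Nat.add_sub_cancel] at hreflect
  have hharmonic : (harmonic (n + 1) : ℝ) = 1 + ∑ j ∈ Ico 1 (n + 1), 1 / ((j : ℝ) + 1) := by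
    simp [harmonic, sum_range_eq_add_Ico _ (Nat.succ_pos n), one_div]
  rw [hharmonic, ← hreflect, ← Finset.Ico_add_one_right_eq_Icc]
  simp only [add_sub_cancel_left]
  refine sum_congr rfl fun a ha => ?_
  rw [Nat.cast_sub (mem_Ico.mp ha).2.le]
  push_cast
  ring_nf

theorem sum_pairs_two_div_sub_add_one (n : ℕ) :
    ∑ q ∈ Icc 1 n ×ˢ Icc 1 n, (if q.1 < q.2 then 2 / ((q.2 : ℝ) - q.1 + 1) else 0) =
      2 * (n + 1) * harmonic n - 4 * n := by
  induction n with
  | zero => simp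
  | succ n ih =>
    rw [sum_product] at ih ⊢
    rw [sum_Icc_succ_top (by omega), sum_eq_zero (s := Icc 1 (n + 1)) (fun b hb => by
      rw [if_neg (by simp only [mem_Icc] at hb; omega)])]
    have hcolumn : ∀ a ∈ Icc 1 n,
        (if a < n + 1 then 2 / (((n + 1 : ℕ) : ℝ) - a + 1) else 0) =
        2 * (1 / ((n : ℝ) + 2 - a)) := by
      intro a ha
      rw [if_pos (by simp only [mem_Icc] at ha; omega)]
      push_cast
      ring
    simp_rw [sum_Icc_succ_top (show 1 ≤ n + 1 by omega)]
    rw [sum_add_distrib, ih, sum_congr rfl hcolumn, ← mul_sum,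
      sum_Icc_one_div_eq_harmonic_succ_sub_one, harmonic_succ]
    push_cast
    field_simp
    ring

theorem length_filter_range'_mem_Icc {n a b : ℕ} (ha : 1 ≤ a) (hbn : b ≤ n) :
    ((List.range' 1 n).filter fun x => a ≤ x ∧ x ≤ b).length = b + 1 - a := by
  rw [← List.toFinset_card_of_nodup ((List.nodup_range' (s := 1) (n := n)).filter _),
    ← Nat.card_Icc]
  congr 1
  ext x
  simp only [List.mem_toFinset, List.mem_filter, List.mem_range'_1, decide_eq_true_eq, mem_Icc]
  omega

theorem card_compared_perms {n a b : ℕ} (ha : 1 ≤ a) (hab : a < b) (hbn : b ≤ n) :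
    (b + 1 - a) * #{σ ∈ (List.range' 1 n).permutations.toFinset | Compared σ a b} =
      2 * n.factorial := by
  set P := (List.range' 1 n).permutations.toFinset
  set r : ℕ → Bool := fun x => a ≤ x ∧ x ≤ b
  have hmem : ∀ {x}, 1 ≤ x → x ≤ n → x ∈ List.range' 1 n := fun h₁ h₂ => by
    rw [List.mem_range'_1]; omega
  have hsplit : {σ ∈ P | Compared σ a b} =
      {σ ∈ P | σ.find? r = some a} ∪ {σ ∈ P | σ.find? r = some b} := by
    ext σ
    simp only [mem_filter, mem_union, ← and_or_left, Compared, hab, true_and, and_congr_right_iff]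
    intro hσ
    have hperm := List.mem_permutations.mp (List.mem_toFinset.mp hσ)
    simp [hperm.mem_iff, hmem ha (by omega), hmem (by omega) hbn, r]
  have hcount {c : ℕ} (hac : a ≤ c) (hcb : c ≤ b) :
      (b + 1 - a) * #{σ ∈ P | σ.find? r = some c} = n.factorial := by
    have := List.length_filter_mul_card_permutations_find?_eq_some List.nodup_range'
      (hmem (by omega) (by omega)) (show r c by simp [r, hac, hcb])
    rwa [length_filter_range'_mem_Icc ha hbn, List.length_range'] at this
  rw [hsplit, card_union_of_disjoint, mul_add, hcount le_rfl hab.le, hcount hab.le le_rfl, two_mul]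
  exact disjoint_filter.mpr fun σ _ h₁ h₂ => by rw [h₁, Option.some_inj] at h₂; omega

theorem card_compared_perms_div_factorial {n a b : ℕ} (ha : 1 ≤ a) (hbn : b ≤ n) :
    (#{σ ∈ (List.range' 1 n).permutations.toFinset | Compared σ a b} : ℝ) / n.factorial =
      if a < b then 2 / ((b : ℝ) - a + 1) else 0 := by
  split_ifs with hab
  · have hcount := congrArg (Nat.cast (R := ℝ)) (card_compared_perms ha hab hbn)
    push_cast [Nat.cast_sub (show a ≤ b + 1 by omega)] at hcount
    have hab' : (a : ℝ) < b := by exact_mod_cast hab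
    rw [div_eq_div_iff (by positivity) (by linarith)]
    linarith
  · rw [filter_false_of_mem fun σ _ h => hab h.1]
    simp

theorem qc_eq_card_compared_of_perm {n : ℕ} {σ : List ℕ} (hσ : σ.Perm (List.range' 1 n)) :
    qc σ = #{q ∈ Icc 1 n ×ˢ Icc 1 n | Compared σ q.1 q.2} :=
  qc_eq_card_compared (hσ.nodup_iff.mpr List.nodup_range') fun x hx => by
    rw [hσ.mem_iff, List.mem_range'_1] at hx
    exact mem_Icc.mpr ⟨hx.1, by omega⟩

theorem stmt5_general (n : ℕ) :
    (1 / (n.factorial : ℝ)) *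
        ((List.range' 1 n).permutations.map (fun σ => (qc σ : ℝ))).sum
      = 2 * (n + 1) * (∑ j ∈ Finset.Icc 1 n, (1 : ℝ) / j) - 4 * n := by
  set P := (List.range' 1 n).permutations.toFinset
  have hdouble :
      ∑ σ ∈ P, qc σ = ∑ q ∈ Icc 1 n ×ˢ Icc 1 n, #{σ ∈ P | Compared σ q.1 q.2} := by
    rw [sum_congr rfl fun σ hσ =>
      qc_eq_card_compared_of_perm (List.mem_permutations.mp (List.mem_toFinset.mp hσ))]
    exact sum_card_bipartiteAbove_eq_sum_card_bipartiteBelow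
      fun σ (q : ℕ × ℕ) => Compared σ q.1 q.2
  rw [← List.sum_toFinset _ (List.nodup_permutations _ List.nodup_range'), ← Nat.cast_sum,
    hdouble, Nat.cast_sum, mul_sum]
  have hprob : ∀ q ∈ Icc 1 n ×ˢ Icc 1 n,
      1 / (n.factorial : ℝ) * #{σ ∈ P | Compared σ q.1 q.2} =
        if q.1 < q.2 then 2 / ((q.2 : ℝ) - q.1 + 1) else 0 := fun q hq => by
    rw [one_div_mul_eq_div]
    exact card_compared_perms_div_factorial (mem_Icc.mp (mem_product.mp hq).1).1
      (mem_Icc.mp (mem_product.mp hq).2).2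
  rw [sum_congr rfl hprob, sum_pairs_two_div_sub_add_one, harmonic_eq_sum_Icc]
  push_cast
  simp only [one_div]

/-- The average number of Quicksort key comparisons over all `n!` permutations of
`{1, …, n}` equals `2 (n+1) Hₙ - 4 n`, where `Hₙ` is the `n`-th harmonic number. -/
theorem stmt5 (n : ℕ) (hn : 1 ≤ n) :
    (1 / (n.factorial : ℝ)) *
        ((List.range' 1 n).permutations.map (fun σ => (qc σ : ℝ))).sum
      = 2 * (n + 1) * (∑ j ∈ Finset.Icc 1 n, (1 : ℝ) / j) - 4 * n :=
  stmt5_general n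
end

section
/- (Rejection sampling correctness.) Let f and g be nonnegative measurable functions on ℝ with f a probability density, ∫_ℝ g = c ∈ (0,∞), and f(x) ≤ g(x) for all x. Let X be a random variable with density g/c and let U be uniform on [0,1], independent of X. Then the conditional distribution of X given the event {U·g(X) ≤ f(X)} is absolutely continuous with respect to Lebesgue measure with density f; i.e., for every Borel set B ⊆ ℝ, P(X ∈ B | U·g(X) ≤ f(X)) = ∫_B f(x) dx. -/
open MeasureTheory ProbabilityTheory Real
open scoped ENNReal

/-- Rejection sampling correctness: if `f ≤ g` pointwise, `f` is a probability density,
`∫ g = c ∈ (0, ∞)`, `X` has density `g / c`, and `U` is uniform on `[0,1]` independent of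
`X`, then conditionally on acceptance `{U · g(X) ≤ f(X)}`, the random variable `X` has
Lebesgue density `f`: for every Borel set `B`,
`P(X ∈ B | U · g(X) ≤ f(X)) = ∫_B f`. -/
theorem stmt10
    {Ω : Type*} [MeasurableSpace Ω] (P : Measure Ω) [IsProbabilityMeasure P]
    (X U : Ω → ℝ) (hX : Measurable X) (hU : Measurable U)
    (hInd : IndepFun X U P)
    (f g : ℝ → ℝ) (hf_meas : Measurable f) (hg_meas : Measurable g)
    (hf_nonneg : ∀ x, 0 ≤ f x) (hg_nonneg : ∀ x, 0 ≤ g x)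
    (hf_int : ∫ x : ℝ, f x = 1)
    (c : ℝ) (hc : 0 < c) (hg_int : Integrable g volume) (hgc : ∫ x : ℝ, g x = c)
    (hfg : ∀ x, f x ≤ g x)
    (hXlaw : P.map X = volume.withDensity (fun x => ENNReal.ofReal (g x / c)))
    (hUlaw : P.map U = volume.restrict (Set.Icc (0 : ℝ) 1)) :
    ∀ B : Set ℝ, MeasurableSet B →
      (P[|{ω | U ω * g (X ω) ≤ f (X ω)}]) {ω | X ω ∈ B}
        = ENNReal.ofReal (∫ x in B, f x) := by
  set A : Set Ω := {ω | U ω * g (X ω) ≤ f (X ω)} with hA_def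
  have hA_meas : MeasurableSet A :=
    measurableSet_le (hU.mul (hg_meas.comp hX)) (hf_meas.comp hX)
  have hfInt : Integrable f volume := by
    refine hg_int.mono' hf_meas.aestronglyMeasurable ?_
    filter_upwards with x
    rw [Real.norm_eq_abs, abs_of_nonneg (hf_nonneg x)]
    exact hfg x
  -- value of the uniform measure on the acceptance slice
  have hF : ∀ x : ℝ, (volume.restrict (Set.Icc (0 : ℝ) 1)) {u : ℝ | u * g x ≤ f x}
      = if g x = 0 then 1 else ENNReal.ofReal (f x / g x) := by
    intro x
    by_cases hgx : g x = 0
    · have hset : {u : ℝ | u * g x ≤ f x} = Set.univ := by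
        ext u; simp [hgx, hf_nonneg x]
      rw [hset, if_pos hgx, Measure.restrict_apply_univ, Real.volume_Icc]
      norm_num
    · have hgpos : 0 < g x := (hg_nonneg x).lt_of_ne (Ne.symm hgx)
      have hset : {u : ℝ | u * g x ≤ f x} = Set.Iic (f x / g x) := by
        ext u; simp [Set.mem_Iic, le_div_iff₀ hgpos]
      have h1 : 0 ≤ f x / g x := div_nonneg (hf_nonneg x) hgpos.le
      have h2 : f x / g x ≤ 1 := (div_le_one hgpos).mpr (hfg x)
      have hinter : Set.Iic (f x / g x) ∩ Set.Icc (0 : ℝ) 1 = Set.Icc 0 (f x / g x) := by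
        ext u
        simp only [Set.mem_inter_iff, Set.mem_Iic, Set.mem_Icc]
        exact ⟨fun ⟨h, h0, _⟩ => ⟨h0, h⟩, fun ⟨h0, h⟩ => ⟨h, h0, h.trans h2⟩⟩
      rw [hset, if_neg hgx, Measure.restrict_apply measurableSet_Iic, hinter, Real.volume_Icc]
      simp
  have hFmeas : Measurable fun x : ℝ =>
      (if g x = 0 then (1 : ℝ≥0∞) else ENNReal.ofReal (f x / g x)) := by
    exact Measurable.ite (hg_meas (measurableSet_singleton 0)) measurable_const
      (ENNReal.measurable_ofReal.comp (hf_meas.div hg_meas))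
  have hprod : ∀ x : ℝ, ENNReal.ofReal (g x / c) *
      (if g x = 0 then (1 : ℝ≥0∞) else ENNReal.ofReal (f x / g x))
      = ENNReal.ofReal (f x / c) := by
    intro x
    by_cases hgx : g x = 0
    · have hfx : f x = 0 := le_antisymm ((hfg x).trans_eq hgx) (hf_nonneg x)
      simp [hgx, hfx]
    · have hgpos : 0 < g x := (hg_nonneg x).lt_of_ne (Ne.symm hgx)
      rw [if_neg hgx, ← ENNReal.ofReal_mul (div_nonneg (hg_nonneg x) hc.le)]
      congr 1
      field_simp
  -- the key computation
  have key : ∀ B : Set ℝ, MeasurableSet B →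
      P (A ∩ {ω | X ω ∈ B}) = ENNReal.ofReal ((∫ x in B, f x) / c) := by
    intro B hB
    have hmap : P.map (fun ω => (X ω, U ω)) = (P.map X).prod (P.map U) :=
      (indepFun_iff_map_prod_eq_prod_map_map hX.aemeasurable hU.aemeasurable).mp hInd
    have hSmeas : MeasurableSet {p : ℝ × ℝ | p.2 * g p.1 ≤ f p.1 ∧ p.1 ∈ B} := by
      refine MeasurableSet.inter ?_ (measurable_fst hB)
      exact measurableSet_le (measurable_snd.mul (hg_meas.comp measurable_fst))
        (hf_meas.comp measurable_fst)
    have hpre : A ∩ {ω | X ω ∈ B}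
        = (fun ω => (X ω, U ω)) ⁻¹' {p : ℝ × ℝ | p.2 * g p.1 ≤ f p.1 ∧ p.1 ∈ B} := by
      ext ω; simp [hA_def, Set.mem_inter_iff]
    rw [hpre, ← Measure.map_apply (hX.prodMk hU) hSmeas, hmap, hXlaw, hUlaw]
    rw [Measure.prod_apply hSmeas]
    have hslice : ∀ x : ℝ,
        (volume.restrict (Set.Icc (0 : ℝ) 1))
          (Prod.mk x ⁻¹' {p : ℝ × ℝ | p.2 * g p.1 ≤ f p.1 ∧ p.1 ∈ B})
        = B.indicator (fun x => if g x = 0 then 1 else ENNReal.ofReal (f x / g x)) x := by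
      intro x
      by_cases hxB : x ∈ B
      · have : Prod.mk x ⁻¹' {p : ℝ × ℝ | p.2 * g p.1 ≤ f p.1 ∧ p.1 ∈ B}
            = {u : ℝ | u * g x ≤ f x} := by ext u; simp [hxB]
        rw [this, hF x, Set.indicator_of_mem hxB]
      · have : Prod.mk x ⁻¹' {p : ℝ × ℝ | p.2 * g p.1 ≤ f p.1 ∧ p.1 ∈ B} = ∅ := by
          ext u; simp [hxB]
        rw [this, Set.indicator_of_notMem hxB]
        simp
    have hd : Measurable fun x : ℝ => ENNReal.ofReal (g x / c) :=
      (hg_meas.div measurable_const).ennreal_ofReal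
    rw [lintegral_congr hslice,
      lintegral_withDensity_eq_lintegral_mul volume hd (hFmeas.indicator hB)]
    have hpt : ∀ x : ℝ, ((fun x => ENNReal.ofReal (g x / c)) *
        fun x => B.indicator (fun x => if g x = 0 then 1 else ENNReal.ofReal (f x / g x)) x) x
        = B.indicator (fun x => ENNReal.ofReal (f x / c)) x := by
      intro x
      by_cases hxB : x ∈ B
      · simp only [Pi.mul_apply, Set.indicator_of_mem hxB]
        exact hprod x
      · simp [Set.indicator_of_notMem hxB]
    rw [lintegral_congr hpt, lintegral_indicator hB _]
    rw [← ofReal_integral_eq_lintegral_ofReal ((hfInt.div_const c).restrict)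
      (Filter.Eventually.of_forall fun x => div_nonneg (hf_nonneg x) hc.le)]
    rw [integral_div]
  -- total acceptance probability
  have hPA : P A = ENNReal.ofReal (1 / c) := by
    have := key Set.univ MeasurableSet.univ
    simpa [Measure.restrict_univ, hf_int] using this
  intro B hB
  rw [cond_apply hA_meas, key B hB, hPA]
  have hInonneg : 0 ≤ ∫ x in B, f x :=
    setIntegral_nonneg hB fun x _ => hf_nonneg x
  rw [one_div, ENNReal.ofReal_inv_of_pos hc, inv_inv,
    ← ENNReal.ofReal_mul hc.le]
  congr 1
  rw [mul_comm, div_mul_cancel₀ _ hc.ne']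
end

section
/- (Correctness of the approximate comparison test.) Let (y_n)_{n≥1} and (R_n)_{n≥1} be real sequences and y, t ∈ ℝ such that |y_n − y| ≤ R_n for all n, R_n → 0 as n → ∞, and t ≠ y. Then: (i) there exists n with |t − y_n| ≥ R_n; and (ii) for every n with |t − y_n| ≥ R_n, one has t ≤ y_n − R_n if and only if t < y. -/
open Filter

/-- Correctness of the approximate comparison test: if `|y n - y| ≤ R n` for all `n`,
`R n → 0`, and `t ≠ y`, then (i) some `n` satisfies `|t - y n| ≥ R n`, and (ii) for
every such `n`, `t ≤ y n - R n` holds if and only if `t < y`. -/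
theorem stmt12 (y R : ℕ → ℝ) (Y t : ℝ)
    (happrox : ∀ n, |y n - Y| ≤ R n)
    (hR : Tendsto R atTop (nhds 0))
    (hty : t ≠ Y) :
    (∃ n, R n ≤ |t - y n|) ∧
    (∀ n, R n ≤ |t - y n| → (t ≤ y n - R n ↔ t < Y)) := by
  constructor
  · have hpos : 0 < |t - Y| := abs_pos.mpr (sub_ne_zero.mpr hty)
    have := (hR.eventually (eventually_lt_nhds (show (0:ℝ) < |t - Y|/2 by linarith))).exists
    obtain ⟨n, hn⟩ := this
    refine ⟨n, ?_⟩
    have h1 := happrox n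
    have h2 : |t - Y| ≤ |t - y n| + |y n - Y| := by
      calc |t - Y| = |(t - y n) + (y n - Y)| := by ring_nf
        _ ≤ |t - y n| + |y n - Y| := abs_add_le _ _
    linarith
  · intro n hn
    have h1 := happrox n
    have h1a := abs_le.mp h1
    constructor
    · intro h
      have : t < Y ∨ t = Y := lt_or_eq_of_le (by linarith [h1a.1])
      rcases this with h' | h'
      · exact h'
      · exact absurd h' hty
    · intro h
      rcases le_or_gt t (y n - R n) with h' | h'
      · exact h'
      · exfalso
        rcases abs_cases (t - y n) with ⟨he, _⟩ | ⟨he, _⟩ <;> rw [he] at hn <;> linarith [h1a.1, h1a.2]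
end
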